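/- arXiv:1510.06876 — 5 statements merged into one kernel-verified Lean document; each statement's English description precedes it below -/
import Mathlib

section
/- Let K be a field equipped with a complete nontrivial non-Archimedean absolute value, and let A and B be non-unital Banach algebras over K with nondegenerate products. Suppose A possesses a bounded approximate identity, and Φ : A → M(B) is a nondegenerate continuous algebra homomorphism into the multiplier algebra of B, meaning that the linear spans of {Φ(a)b : a ∈ A, b ∈ B} and of {bΦ(a) : a ∈ A, b ∈ B} are dense in B. Then Φ has a unique extension to a continuous algebra homomorphism Φ₁ : M(A) → M(B) between the multiplier algebras. -/
/-!
A continuous extension `Φ₁` must satisfy `Φ₁(T) Φ(a) = Φ(T a)` and `Φ(a) Φ₁(T) = Φ(a T)`; since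
the elements `Φ(a) b`, resp. `b Φ(a)`, span dense subspaces of `B`, these identities determine
`Φ₁(T)`. For existence, `Φ₁(T)` is the strict limit of the net `Φ(T eₗ)`, which is bounded because
the approximate identity is: on the generators it converges to `Φ(T a) b`, resp. `Φ(a T) b`, and
uniform boundedness spreads the convergence to all of the complete space `B`. Linearity,
multiplicativity and the extension property then all follow from the uniqueness.
-/

open MultiplierAlgebra Filter Topology

section StrongLimit

variable {𝕜 E F ι : Type*} [NontriviallyNormedField 𝕜] [SeminormedAddCommGroup E]
  [NormedSpace 𝕜 E] [NormedAddCommGroup F] [NormedSpace 𝕜 F] [Nonempty ι] [SemilatticeSup ι]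

theorem ContinuousLinearMap.isClosed_setOf_cauchySeq_apply {f : ι → E →L[𝕜] F} {M : ℝ}
    (hf : ∀ i, ‖f i‖ ≤ M) : IsClosed {x | CauchySeq (f · x)} := by
  -- `(f i x)` is Cauchy iff the equicontinuous family `f i - f j` tends to `0` at `x`.
  let g : ι × ι → E →L[𝕜] F := fun p => f p.1 - f p.2
  have hg : Equicontinuous ((↑) ∘ g) := ((NormedSpace.equicontinuous_TFAE g).out 1 5).2 <|
    show ∃ C, ∀ p, ‖g p‖ ≤ C from
      ⟨M + M, fun p => (norm_sub_le _ _).trans (add_le_add (hf p.1) (hf p.2))⟩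
  convert hg.isClosed_setOfPred_tendsto (l := atTop) (f := fun _ => 0) continuous_const with x
  simp only [cauchySeq_iff_tendsto_dist_atTop_0, dist_eq_norm,
    ← tendsto_zero_iff_norm_tendsto_zero]
  rfl

theorem ContinuousLinearMap.exists_tendsto_apply_of_dense_span [CompleteSpace F]
    {f : ι → E →L[𝕜] F} {M : ℝ} (hf : ∀ i, ‖f i‖ ≤ M) {S : Set E}
    (hS : Dense (Submodule.span 𝕜 S : Set E))
    (hconv : ∀ x ∈ S, ∃ y, Tendsto (f · x) atTop (𝓝 y)) (x : E) :
    ∃ y, Tendsto (f · x) atTop (𝓝 y) := by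
  let V : Submodule 𝕜 E :=
    { carrier := {x | ∃ y, Tendsto (f · x) atTop (𝓝 y)}
      add_mem' := fun ⟨y, hy⟩ ⟨z, hz⟩ => ⟨y + z, by simpa using hy.add hz⟩
      zero_mem' := ⟨0, by simp⟩
      smul_mem' := fun k _ ⟨y, hy⟩ => ⟨k • y, by simpa using hy.const_smul k⟩ }
  have hV : IsClosed (V : Set E) := by
    have hVC : (V : Set E) = {x | CauchySeq (f · x)} :=
      Set.ext fun _ => ⟨fun ⟨_, hy⟩ => hy.cauchySeq, cauchySeq_tendsto_of_complete⟩
    exact hVC ▸ isClosed_setOf_cauchySeq_apply hf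
  have hSV : (Submodule.span 𝕜 S : Set E) ⊆ V := Submodule.span_le.2 hconv
  exact hV.closure_subset_iff.2 hSV (hS.closure_eq ▸ Set.mem_univ x)

theorem ContinuousLinearMap.exists_tendsto_apply_of_norm_le {f : ι → E →L[𝕜] F} {M : ℝ}
    (hf : ∀ i, ‖f i‖ ≤ M) (hconv : ∀ x, ∃ y, Tendsto (f · x) atTop (𝓝 y)) :
    ∃ g : E →L[𝕜] F, ‖g‖ ≤ M ∧ ∀ x, Tendsto (f · x) atTop (𝓝 (g x)) := by
  choose g hg using hconv
  let gₗ : E →ₗ[𝕜] F := linearMapOfTendsto g (fun i => (f i : E →ₗ[𝕜] F)) (tendsto_pi_nhds.2 hg)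
  have hM : 0 ≤ M := (norm_nonneg _).trans (hf (Classical.arbitrary ι))
  have hbound : ∀ x, ‖gₗ x‖ ≤ M * ‖x‖ := fun x =>
    le_of_tendsto' (hg x).norm fun i => (f i).le_of_opNorm_le (hf i) x
  exact ⟨gₗ.mkContinuous M hbound, LinearMap.mkContinuous_norm_le _ hM _, hg⟩

end StrongLimit

namespace DoubleCentralizer

section Topology

variable {𝕜 B : Type*} [NontriviallyNormedField 𝕜] [NonUnitalNormedRing B] [NormedSpace 𝕜 B]
  [SMulCommClass 𝕜 B B] [IsScalarTower 𝕜 B B]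

theorem norm_fst_le (m : 𝓜(𝕜, B)) : ‖m.fst‖ ≤ ‖m‖ := _root_.norm_fst_le (toProdHom m)

theorem norm_snd_le (m : 𝓜(𝕜, B)) : ‖m.snd‖ ≤ ‖m‖ := _root_.norm_snd_le (toProdHom m)

theorem continuous_fst_apply (b : B) : Continuous fun m : 𝓜(𝕜, B) => m.fst b :=
  (ContinuousLinearMap.apply 𝕜 B b).continuous.comp
    isUniformEmbedding_toProdMulOpposite.uniformContinuous.continuous.fst

theorem continuous_snd_apply (b : B) : Continuous fun m : 𝓜(𝕜, B) => m.snd b :=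
  (ContinuousLinearMap.apply 𝕜 B b).continuous.comp
    (MulOpposite.continuous_unop.comp
      isUniformEmbedding_toProdMulOpposite.uniformContinuous.continuous.snd)

theorem exists_tendsto_of_norm_le_of_dense_span [CompleteSpace B] {ι : Type*} [Nonempty ι]
    [SemilatticeSup ι] {m : ι → 𝓜(𝕜, B)} {M : ℝ} (hm : ∀ i, ‖m i‖ ≤ M) {SL SR : Set B}
    (hSL : Dense (Submodule.span 𝕜 SL : Set B)) (hSR : Dense (Submodule.span 𝕜 SR : Set B))
    (hL : ∀ x ∈ SL, ∃ y, Tendsto (fun i => (m i).fst x) atTop (𝓝 y))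
    (hR : ∀ x ∈ SR, ∃ y, Tendsto (fun i => (m i).snd x) atTop (𝓝 y)) :
    ∃ m₀ : 𝓜(𝕜, B), ‖m₀‖ ≤ M ∧ (∀ x, Tendsto (fun i => (m i).fst x) atTop (𝓝 (m₀.fst x))) ∧
      ∀ x, Tendsto (fun i => (m i).snd x) atTop (𝓝 (m₀.snd x)) := by
  have hmL i : ‖(m i).fst‖ ≤ M := (norm_fst_le _).trans (hm i)
  have hmR i : ‖(m i).snd‖ ≤ M := (norm_snd_le _).trans (hm i)
  obtain ⟨L, hLM, hL⟩ := ContinuousLinearMap.exists_tendsto_apply_of_norm_le hmL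
    (ContinuousLinearMap.exists_tendsto_apply_of_dense_span hmL hSL hL)
  obtain ⟨R, hRM, hR⟩ := ContinuousLinearMap.exists_tendsto_apply_of_norm_le hmR
    (ContinuousLinearMap.exists_tendsto_apply_of_dense_span hmR hSR hR)
  have central x y : R x * y = x * L y :=
    tendsto_nhds_unique ((hR x).mul_const y) <| by
      simpa only [(m _).central] using (hL y).const_mul x
  exact ⟨⟨(L, R), central⟩, norm_prod_le_iff.2 ⟨hLM, hRM⟩, hL, hR⟩

end Topology

section Nondegenerate

variable {K A : Type*} [NontriviallyNormedField K]
  [NonUnitalNormedRing A] [NormedSpace K A] [SMulCommClass K A A] [IsScalarTower K A A]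

theorem fst_apply_mul (hA : ∀ b : A, (∀ a : A, a * b = 0) → b = 0) (T : 𝓜(K, A)) (x y : A) :
    T.fst (x * y) = T.fst x * y := by
  refine sub_eq_zero.1 <| hA _ fun z => ?_
  rw [mul_sub, ← T.central z (x * y), ← mul_assoc, T.central z x, mul_assoc, sub_self]

theorem snd_apply_mul (hA : ∀ a : A, (∀ b : A, a * b = 0) → a = 0) (T : 𝓜(K, A)) (x y : A) :
    T.snd (x * y) = x * T.snd y := by
  refine sub_eq_zero.1 <| hA _ fun z => ?_
  rw [sub_mul, T.central (x * y) z, mul_assoc, ← T.central y z, ← mul_assoc, sub_self]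

theorem mul_coe_eq_coe_fst (hA : ∀ b : A, (∀ a : A, a * b = 0) → b = 0) (T : 𝓜(K, A)) (a : A) :
    T * (a : 𝓜(K, A)) = (T.fst a : 𝓜(K, A)) := by
  ext x : 3
  · exact fst_apply_mul hA T a x
  · exact T.central x a

theorem coe_mul_eq_coe_snd (hA : ∀ a : A, (∀ b : A, a * b = 0) → a = 0) (T : 𝓜(K, A)) (a : A) :
    (a : 𝓜(K, A)) * T = (T.snd a : 𝓜(K, A)) := by
  ext x : 3
  · exact (T.central a x).symm
  · exact snd_apply_mul hA T x a

end Nondegenerate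

end DoubleCentralizer

section Extension

variable {K A B : Type*} [NontriviallyNormedField K]
  [NonUnitalNormedRing A] [NormedSpace K A] [SMulCommClass K A A] [IsScalarTower K A A]
  [NonUnitalNormedRing B] [NormedSpace K B] [SMulCommClass K B B] [IsScalarTower K B B]
  {Φ : A →ₙₐ[K] 𝓜(K, B)}

/-- `m Φ(a) = Φ(T a)` and `Φ(a) m = Φ(a T)`, compared only through the left, resp. right, action
on `B`: that is all the density of the spans of `Φ(a) b`, resp. `b Φ(a)`, can detect. -/
structure IsExtensionAt (Φ : A →ₙₐ[K] 𝓜(K, B)) (T : 𝓜(K, A)) (m : 𝓜(K, B)) : Prop where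
  mul_fst : ∀ a, (m * Φ a).fst = (Φ (T.fst a)).fst
  mul_snd : ∀ a, (Φ a * m).snd = (Φ (T.snd a)).snd

namespace IsExtensionAt

variable {T T' : 𝓜(K, A)} {m m' : 𝓜(K, B)}

theorem eq (hL : Dense (Submodule.span K {x : B | ∃ (a : A) (b : B), (Φ a).fst b = x} : Set B))
    (hR : Dense (Submodule.span K {x : B | ∃ (a : A) (b : B), (Φ a).snd b = x} : Set B))
    (h : IsExtensionAt Φ T m) (h' : IsExtensionAt Φ T m') : m = m' := by
  ext1
  refine Prod.ext (ContinuousLinearMap.ext_on hL ?_) (ContinuousLinearMap.ext_on hR ?_)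
  · rintro _ ⟨a, b, rfl⟩
    exact congr($((h.mul_fst a).trans (h'.mul_fst a).symm) b)
  · rintro _ ⟨a, b, rfl⟩
    exact congr($((h.mul_snd a).trans (h'.mul_snd a).symm) b)

theorem zero : IsExtensionAt Φ 0 0 :=
  ⟨fun _ => by simp, fun _ => by simp⟩

theorem add (h : IsExtensionAt Φ T m) (h' : IsExtensionAt Φ T' m') :
    IsExtensionAt Φ (T + T') (m + m') :=
  ⟨fun a => by simp [add_mul, h.mul_fst, h'.mul_fst],
   fun a => by simp [mul_add, h.mul_snd, h'.mul_snd]⟩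

theorem smul (h : IsExtensionAt Φ T m) (k : K) : IsExtensionAt Φ (k • T) (k • m) :=
  ⟨fun a => by simp [h.mul_fst], fun a => by simp [h.mul_snd]⟩

theorem mul (h : IsExtensionAt Φ T m) (h' : IsExtensionAt Φ T' m') :
    IsExtensionAt Φ (T * T') (m * m') := by
  refine ⟨fun a => ?_, fun a => ?_⟩
  · rw [mul_assoc, DoubleCentralizer.mul_fst, h'.mul_fst, ← DoubleCentralizer.mul_fst,
      h.mul_fst]
    rfl
  · rw [← mul_assoc, DoubleCentralizer.mul_snd, h.mul_snd, ← DoubleCentralizer.mul_snd,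
      h'.mul_snd]
    rfl

end IsExtensionAt

theorem isExtensionAt_coe (a' : A) : IsExtensionAt Φ a' (Φ a') :=
  ⟨fun a => by rw [← map_mul]; rfl, fun a => by rw [← map_mul]; rfl⟩

theorem isExtensionAt_of_map_coe (hA₁ : ∀ a : A, (∀ b : A, a * b = 0) → a = 0)
    (hA₂ : ∀ b : A, (∀ a : A, a * b = 0) → b = 0) {Ψ : 𝓜(K, A) →ₙₐ[K] 𝓜(K, B)}
    (hΨ : ∀ a : A, Ψ a = Φ a) (T : 𝓜(K, A)) : IsExtensionAt Φ T (Ψ T) :=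
  ⟨fun a => by rw [← hΨ, ← map_mul, DoubleCentralizer.mul_coe_eq_coe_fst hA₂, hΨ],
   fun a => by rw [← hΨ, ← map_mul, DoubleCentralizer.coe_mul_eq_coe_snd hA₁, hΨ]⟩

theorem exists_isExtensionAt [CompleteSpace B] (hA : ∀ b : A, (∀ a : A, a * b = 0) → b = 0)
    {Λ : Type*} [Nonempty Λ] [SemilatticeSup Λ] (e : Λ → A) {C : ℝ} (he_bdd : ∀ l, ‖e l‖ ≤ C)
    (he_left : ∀ x : A, Tendsto (fun l => e l * x) atTop (𝓝 x))
    (he_right : ∀ x : A, Tendsto (fun l => x * e l) atTop (𝓝 x))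
    (hΦ : Continuous Φ) {c : ℝ} (hc₀ : 0 ≤ c) (hc : ∀ a, ‖Φ a‖ ≤ c * ‖a‖)
    (hL : Dense (Submodule.span K {x : B | ∃ (a : A) (b : B), (Φ a).fst b = x} : Set B))
    (hR : Dense (Submodule.span K {x : B | ∃ (a : A) (b : B), (Φ a).snd b = x} : Set B))
    (T : 𝓜(K, A)) : ∃ m : 𝓜(K, B), ‖m‖ ≤ c * C * ‖T‖ ∧ IsExtensionAt Φ T m := by
  have hbound l : ‖Φ (T.fst (e l))‖ ≤ c * C * ‖T‖ := calc
    ‖Φ (T.fst (e l))‖ ≤ c * (‖T‖ * C) := by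
      refine (hc _).trans (mul_le_mul_of_nonneg_left ?_ hc₀)
      exact T.fst.le_of_opNorm_le_of_le (DoubleCentralizer.norm_fst_le T) (he_bdd l)
    _ = c * C * ‖T‖ := by ring
  have hfst a b : Tendsto (fun l => (Φ (T.fst (e l))).fst ((Φ a).fst b)) atTop
      (𝓝 ((Φ (T.fst a)).fst b)) := by
    have hcont : Continuous fun x => (Φ (T.fst x)).fst b :=
      (DoubleCentralizer.continuous_fst_apply b).comp (hΦ.comp T.fst.continuous)
    refine ((hcont.tendsto a).comp (he_left a)).congr fun l => ?_
    simp only [Function.comp_apply, DoubleCentralizer.fst_apply_mul hA, map_mul]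
    rfl
  have hsnd a b : Tendsto (fun l => (Φ (T.fst (e l))).snd ((Φ a).snd b)) atTop
      (𝓝 ((Φ (T.snd a)).snd b)) := by
    have hcont : Continuous fun x => (Φ x).snd b :=
      (DoubleCentralizer.continuous_snd_apply b).comp hΦ
    refine ((hcont.tendsto (T.snd a)).comp (he_right (T.snd a))).congr fun l => ?_
    rw [Function.comp_apply, T.central, map_mul]
    rfl
  obtain ⟨m, hm, hm_fst, hm_snd⟩ :=
    DoubleCentralizer.exists_tendsto_of_norm_le_of_dense_span hbound hL hR
      (by rintro _ ⟨a, b, rfl⟩; exact ⟨_, hfst a b⟩) (by rintro _ ⟨a, b, rfl⟩; exact ⟨_, hsnd a b⟩)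
  exact ⟨m, hm, fun a => ContinuousLinearMap.ext fun b => tendsto_nhds_unique (hm_fst _) (hfst a b),
    fun a => ContinuousLinearMap.ext fun b => tendsto_nhds_unique (hm_snd _) (hsnd a b)⟩

variable (Φ) in
noncomputable def nonUnitalAlgHomOfIsExtensionAt
    (hL : Dense (Submodule.span K {x : B | ∃ (a : A) (b : B), (Φ a).fst b = x} : Set B))
    (hR : Dense (Submodule.span K {x : B | ∃ (a : A) (b : B), (Φ a).snd b = x} : Set B))
    (f : 𝓜(K, A) → 𝓜(K, B)) (hf : ∀ T, IsExtensionAt Φ T (f T)) : 𝓜(K, A) →ₙₐ[K] 𝓜(K, B) where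
  toFun := f
  map_smul' k T := ((hf T).smul k).eq hL hR (hf (k • T)) |>.symm
  map_zero' := (hf 0).eq hL hR .zero
  map_add' T T' := (hf (T + T')).eq hL hR ((hf T).add (hf T'))
  map_mul' T T' := (hf (T * T')).eq hL hR ((hf T).mul (hf T'))

end Extension

theorem multiplier_extension_of_nondegenerate_hom_general
    {K A B : Type*} [NontriviallyNormedField K]
    [NonUnitalNormedRing A] [NormedSpace K A] [SMulCommClass K A A] [IsScalarTower K A A]
    [NonUnitalNormedRing B] [NormedSpace K B] [SMulCommClass K B B] [IsScalarTower K B B]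
    [CompleteSpace B]
    (hAnd₁ : ∀ a : A, (∀ b : A, a * b = 0) → a = 0)
    (hAnd₂ : ∀ b : A, (∀ a : A, a * b = 0) → b = 0)
    (Λ : Type*) [Nonempty Λ] [SemilatticeSup Λ] (e : Λ → A) (C : ℝ)
    (he_bdd : ∀ l : Λ, ‖e l‖ ≤ C)
    (he_left : ∀ x : A, Tendsto (fun l : Λ => e l * x) atTop (nhds x))
    (he_right : ∀ x : A, Tendsto (fun l : Λ => x * e l) atTop (nhds x))
    (Φ : A →ₙₐ[K] 𝓜(K, B)) (hΦcont : Continuous Φ)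
    (hΦnd_left : Dense (Submodule.span K {x : B | ∃ (a : A) (b : B), (Φ a).fst b = x} : Set B))
    (hΦnd_right : Dense (Submodule.span K {x : B | ∃ (a : A) (b : B), (Φ a).snd b = x} : Set B)) :
    ∃! Φ₁ : 𝓜(K, A) →ₙₐ[K] 𝓜(K, B),
      Continuous Φ₁ ∧ ∀ a : A, Φ₁ (a : 𝓜(K, A)) = Φ a := by
  obtain ⟨c, hc₀, hc⟩ := SemilinearMapClass.bound_of_continuous Φ hΦcont
  choose Φ₁ hΦ₁_norm hΦ₁ using exists_isExtensionAt hAnd₂ e he_bdd he_left he_right hΦcont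
    hc₀.le hc hΦnd_left hΦnd_right
  refine ⟨nonUnitalAlgHomOfIsExtensionAt Φ hΦnd_left hΦnd_right Φ₁ hΦ₁,
    ⟨AddMonoidHomClass.continuous_of_bound _ (c * C) hΦ₁_norm,
      fun a => (hΦ₁ a).eq hΦnd_left hΦnd_right (isExtensionAt_coe a)⟩, ?_⟩
  rintro Ψ ⟨-, hΨ⟩
  exact DFunLike.ext _ _ fun T =>
    (isExtensionAt_of_map_coe hAnd₁ hAnd₂ hΨ T).eq hΦnd_left hΦnd_right (hΦ₁ T)

/-- Let `K` be a field with a complete nontrivial non-Archimedean absolute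
value and let `A`, `B` be non-unital Banach algebras over `K` with nondegenerate products.
If `A` has a bounded approximate identity and `Φ : A → M(B)` is a nondegenerate continuous
algebra homomorphism into the multiplier algebra of `B` (that is, the linear spans of
`{Φ(a)b}` and `{bΦ(a)}` are dense in `B`), then `Φ` has a unique extension to a continuous
algebra homomorphism `Φ₁ : M(A) → M(B)`. -/
theorem multiplier_extension_of_nondegenerate_hom
    {K A B : Type*} [NontriviallyNormedField K] [CompleteSpace K] [IsUltrametricDist K]
    [NonUnitalNormedRing A] [NormedSpace K A] [SMulCommClass K A A] [IsScalarTower K A A]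
    [CompleteSpace A]
    [NonUnitalNormedRing B] [NormedSpace K B] [SMulCommClass K B B] [IsScalarTower K B B]
    [CompleteSpace B]
    (hAnd₁ : ∀ a : A, (∀ b : A, a * b = 0) → a = 0)
    (hAnd₂ : ∀ b : A, (∀ a : A, a * b = 0) → b = 0)
    (hBnd₁ : ∀ a : B, (∀ b : B, a * b = 0) → a = 0)
    (hBnd₂ : ∀ b : B, (∀ a : B, a * b = 0) → b = 0)
    (Λ : Type*) [Nonempty Λ] [SemilatticeSup Λ] (e : Λ → A) (C : ℝ)
    (he_bdd : ∀ l : Λ, ‖e l‖ ≤ C)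
    (he_left : ∀ x : A, Tendsto (fun l : Λ => e l * x) atTop (nhds x))
    (he_right : ∀ x : A, Tendsto (fun l : Λ => x * e l) atTop (nhds x))
    (Φ : A →ₙₐ[K] 𝓜(K, B)) (hΦcont : Continuous Φ)
    (hΦnd_left : Dense (Submodule.span K {x : B | ∃ (a : A) (b : B), (Φ a).fst b = x} : Set B))
    (hΦnd_right : Dense (Submodule.span K {x : B | ∃ (a : A) (b : B), (Φ a).snd b = x} : Set B)) :
    ∃! Φ₁ : 𝓜(K, A) →ₙₐ[K] 𝓜(K, B),
      Continuous Φ₁ ∧ ∀ a : A, Φ₁ (a : 𝓜(K, A)) = Φ a :=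
  multiplier_extension_of_nondegenerate_hom_general hAnd₁ hAnd₂ Λ e C he_bdd he_left he_right Φ
    hΦcont hΦnd_left hΦnd_right
end

section
/- Let K be a field with a complete nontrivial non-Archimedean absolute value and let G be a discrete set. The multiplier algebra M(c₀(G,K)) of the pointwise-multiplication Banach algebra c₀(G,K) is isometrically isomorphic to the Banach algebra l^∞(G,K) of all bounded K-valued functions on G with pointwise operations and sup-norm: every multiplier (ρ_l, ρ_r) is given by pointwise multiplication by a unique bounded function f : G → K (so ρ_l(b) = ρ_r(b) = f·b for all b ∈ c₀(G,K)), and conversely pointwise multiplication by any f ∈ l^∞(G,K) defines a multiplier whose norm equals ‖f‖_∞. -/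
open ZeroAtInfty MultiplierAlgebra Filter

section Aux

variable {K G : Type*} [NontriviallyNormedField K] [CompleteSpace K]
  [TopologicalSpace G] [DiscreteTopology G]

/-- The indicator function of a point, as an element of `C₀(G, K)`. -/
noncomputable def c0Delta (s : G) [DecidableEq G] : C₀(G, K) where
  toFun := fun t => if t = s then 1 else 0
  continuous_toFun := continuous_of_discreteTopology
  zero_at_infty' := by
    have h : (fun _ : G => (0 : K)) =ᶠ[cocompact G]
        (fun t : G => if t = s then (1 : K) else 0) := by
      rw [Filter.eventuallyEq_iff_exists_mem]
      refine ⟨{s}ᶜ, ?_, fun x hx => (if_neg (by simpa using hx)).symm⟩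
      rw [Filter.mem_cocompact]
      exact ⟨{s}, isCompact_singleton, le_rfl⟩
    exact Tendsto.congr' h tendsto_const_nhds

@[simp] lemma c0Delta_apply_same (s : G) [DecidableEq G] : (c0Delta s : C₀(G, K)) s = 1 :=
  if_pos rfl

lemma c0_norm_apply_le (g : C₀(G, K)) (s : G) : ‖g s‖ ≤ ‖g‖ := by
  rw [← ZeroAtInftyContinuousMap.norm_toBCF_eq_norm]
  exact g.toBCF.norm_coe_le_norm s

lemma c0_norm_le (g : C₀(G, K)) {C : ℝ} (hC : 0 ≤ C) (h : ∀ s, ‖g s‖ ≤ C) : ‖g‖ ≤ C := by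
  rw [← ZeroAtInftyContinuousMap.norm_toBCF_eq_norm]
  exact BoundedContinuousFunction.norm_le hC |>.mpr h

lemma c0Delta_norm_le_one (s : G) [DecidableEq G] : ‖(c0Delta s : C₀(G, K))‖ ≤ 1 := by
  refine c0_norm_le _ zero_le_one fun t => ?_
  rcases eq_or_ne t s with rfl | ht
  · show ‖if t = t then (1:K) else 0‖ ≤ 1
    simp
  · show ‖if t = s then (1:K) else 0‖ ≤ 1
    simp [if_neg ht]

/-- Pointwise multiplication by a bounded function preserves `C₀`. -/
noncomputable def bcfMulC0 (f : BoundedContinuousFunction G K) (b : C₀(G, K)) : C₀(G, K) where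
  toFun := fun s => f s * b s
  continuous_toFun := continuous_of_discreteTopology
  zero_at_infty' := by
    refine squeeze_zero_norm (a := fun s => ‖f‖ * ‖b s‖) (fun s => ?_) ?_
    · calc ‖f s * b s‖ = ‖f s‖ * ‖b s‖ := norm_mul _ _
        _ ≤ ‖f‖ * ‖b s‖ := by
            exact mul_le_mul_of_nonneg_right (f.norm_coe_le_norm s) (norm_nonneg _)
    · simpa using (b.zero_at_infty'.norm.const_mul ‖f‖)

@[simp] lemma bcfMulC0_apply (f : BoundedContinuousFunction G K) (b : C₀(G, K)) (s : G) :
    bcfMulC0 f b s = f s * b s := rfl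

/-- Pointwise multiplication by a bounded function as a continuous linear map on `C₀`. -/
noncomputable def bcfMulCLM (f : BoundedContinuousFunction G K) : C₀(G, K) →L[K] C₀(G, K) :=
  LinearMap.mkContinuous
    { toFun := bcfMulC0 f
      map_add' := fun x y => by
        ext s
        simp [mul_add]
      map_smul' := fun c x => by
        ext s
        show f s * (c * x s) = c * (f s * x s)
        ring }
    ‖f‖ (fun b => by
      refine c0_norm_le _ (mul_nonneg (norm_nonneg f) (norm_nonneg b)) fun s => ?_
      calc ‖f s * b s‖ = ‖f s‖ * ‖b s‖ := norm_mul _ _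
        _ ≤ ‖f‖ * ‖b‖ :=
          mul_le_mul (f.norm_coe_le_norm s) (c0_norm_apply_le b s) (norm_nonneg _)
            (norm_nonneg _))

@[simp] lemma bcfMulCLM_apply (f : BoundedContinuousFunction G K) (b : C₀(G, K)) (s : G) :
    bcfMulCLM f b s = f s * b s := rfl

end Aux

/-- For a field `K` with a complete nontrivial non-Archimedean absolute
value and a discrete set `G`, the multiplier algebra `M(c₀(G, K))` is isometrically
isomorphic to `l^∞(G, K)`: every multiplier `(ρ_l, ρ_r)` is given by pointwise
multiplication by a unique bounded function `f : G → K`, with norm `‖f‖_∞`, and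
conversely pointwise multiplication by any bounded function `f` defines a multiplier of
norm `‖f‖_∞`. -/
theorem multiplier_algebra_of_c0_eq_linfty {K G : Type*} [NontriviallyNormedField K]
    [CompleteSpace K] [IsUltrametricDist K] [TopologicalSpace G] [DiscreteTopology G] :
    (∀ m : 𝓜(K, C₀(G, K)), ∃! f : BoundedContinuousFunction G K,
      (∀ (b : C₀(G, K)) (s : G), m.fst b s = f s * b s ∧ m.snd b s = f s * b s) ∧
      ‖m‖ = ‖f‖) ∧
    (∀ f : BoundedContinuousFunction G K, ∃ m : 𝓜(K, C₀(G, K)),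
      (∀ (b : C₀(G, K)) (s : G), m.fst b s = f s * b s ∧ m.snd b s = f s * b s) ∧
      ‖m‖ = ‖f‖) := by
  classical
  constructor
  · intro m
    -- the candidate function
    set φ : G → K := fun s => m.fst (c0Delta s) s with hφ
    have hφ_bdd : ∀ s, ‖φ s‖ ≤ ‖m‖ := by
      intro s
      calc ‖φ s‖ ≤ ‖m.fst (c0Delta s)‖ := c0_norm_apply_le _ s
        _ ≤ ‖m.fst‖ * ‖(c0Delta s : C₀(G, K))‖ := m.fst.le_opNorm _
        _ ≤ ‖m.fst‖ * 1 :=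
          mul_le_mul_of_nonneg_left (c0Delta_norm_le_one s) (norm_nonneg _)
        _ = ‖m.fst‖ := mul_one _
        _ ≤ ‖m‖ := by
          rw [DoubleCentralizer.norm_def, Prod.norm_def]
          exact le_max_left _ _
    set f : BoundedContinuousFunction G K :=
      BoundedContinuousFunction.ofNormedAddCommGroup φ continuous_of_discreteTopology ‖m‖
        hφ_bdd with hf
    have hfapp : ∀ s, f s = φ s := fun s => rfl
    -- the key pointwise identities
    have hsnd : ∀ (b : C₀(G, K)) (s : G), m.snd b s = φ s * b s := by
      intro b s
      have h := m.central b (c0Delta s)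
      have h2 := congrFun (congrArg DFunLike.coe h) s
      simp only [ZeroAtInftyContinuousMap.coe_mul, Pi.mul_apply, c0Delta_apply_same,
        mul_one] at h2
      rw [h2, mul_comm]
    have hφsnd : ∀ s : G, m.snd (c0Delta s) s = φ s := by
      intro s
      rw [hsnd (c0Delta s) s, c0Delta_apply_same, mul_one]
    have hfst : ∀ (b : C₀(G, K)) (s : G), m.fst b s = φ s * b s := by
      intro b s
      have h := m.central (c0Delta s) b
      have h2 := congrFun (congrArg DFunLike.coe h) s
      simp only [ZeroAtInftyContinuousMap.coe_mul, Pi.mul_apply, c0Delta_apply_same,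
        one_mul, hφsnd s] at h2
      exact h2.symm
    -- norm equality
    have hnorm : ‖m‖ = ‖f‖ := by
      refine le_antisymm ?_ ?_
      · rw [DoubleCentralizer.norm_def, Prod.norm_def]
        have hb1 : ‖m.fst‖ ≤ ‖f‖ := by
          refine m.fst.opNorm_le_bound (norm_nonneg f) fun b => ?_
          refine c0_norm_le _ (mul_nonneg (norm_nonneg f) (norm_nonneg b)) fun s => ?_
          rw [hfst b s, ← hfapp s]
          calc ‖f s * b s‖ = ‖f s‖ * ‖b s‖ := norm_mul _ _
            _ ≤ ‖f‖ * ‖b‖ :=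
              mul_le_mul (f.norm_coe_le_norm s) (c0_norm_apply_le b s) (norm_nonneg _)
                (norm_nonneg _)
        have hb2 : ‖m.snd‖ ≤ ‖f‖ := by
          refine m.snd.opNorm_le_bound (norm_nonneg f) fun b => ?_
          refine c0_norm_le _ (mul_nonneg (norm_nonneg f) (norm_nonneg b)) fun s => ?_
          rw [hsnd b s, ← hfapp s]
          calc ‖f s * b s‖ = ‖f s‖ * ‖b s‖ := norm_mul _ _
            _ ≤ ‖f‖ * ‖b‖ :=
              mul_le_mul (f.norm_coe_le_norm s) (c0_norm_apply_le b s) (norm_nonneg _)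
                (norm_nonneg _)
        exact max_le hb1 hb2
      · exact BoundedContinuousFunction.norm_le (norm_nonneg m) |>.mpr hφ_bdd
    refine ⟨f, ⟨fun b s => ⟨by rw [hfst b s, hfapp], by rw [hsnd b s, hfapp]⟩, hnorm⟩, ?_⟩
    · rintro g ⟨hg, -⟩
      ext s
      have h1 := (hg (c0Delta s) s).1
      have h2 := hfst (c0Delta s) s
      rw [c0Delta_apply_same, mul_one] at h1 h2
      rw [← h1, h2]
      exact (hfapp s).symm
  · intro f
    refine ⟨⟨(bcfMulCLM f, bcfMulCLM f), fun x y => ?_⟩, fun b s => ⟨rfl, rfl⟩, ?_⟩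
    · ext s
      simp only [ZeroAtInftyContinuousMap.coe_mul, Pi.mul_apply, bcfMulCLM_apply]
      ring
    · have h : ‖(⟨(bcfMulCLM f, bcfMulCLM f), fun x y => by
        ext s
        simp only [ZeroAtInftyContinuousMap.coe_mul, Pi.mul_apply, bcfMulCLM_apply]
        ring⟩ : 𝓜(K, C₀(G, K)))‖ = ‖bcfMulCLM f‖ := by
        rw [DoubleCentralizer.norm_def, Prod.norm_def]
        exact max_self _
      rw [h]
      refine le_antisymm ?_ ?_
      · exact LinearMap.mkContinuous_norm_le _ (norm_nonneg f) _
      · refine BoundedContinuousFunction.norm_le (ContinuousLinearMap.opNorm_nonneg _)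
          |>.mpr fun s => ?_
        calc ‖f s‖ = ‖(bcfMulCLM f (c0Delta s)) s‖ := by
              simp
          _ ≤ ‖bcfMulCLM f (c0Delta s)‖ := c0_norm_apply_le _ s
          _ ≤ ‖bcfMulCLM f‖ * ‖(c0Delta s : C₀(G, K))‖ := (bcfMulCLM f).le_opNorm _
          _ ≤ ‖bcfMulCLM f‖ * 1 :=
            mul_le_mul_of_nonneg_left (c0Delta_norm_le_one s)
              (ContinuousLinearMap.opNorm_nonneg _)
          _ = ‖bcfMulCLM f‖ := mul_one _
end

section
/- Let K be a field with a complete nontrivial non-Archimedean absolute value and let X be a zero-dimensional locally compact Hausdorff topological space. The multiplier algebra M(C₀(X,K)) of the pointwise-multiplication Banach algebra C₀(X,K) is isometrically isomorphic to the Banach algebra C_b(X,K) of all bounded continuous K-valued functions on X with pointwise operations and sup-norm: every multiplier (ρ_l, ρ_r) is given by pointwise multiplication by a unique bounded continuous function f : X → K, with ‖f‖_∞ ≤ ‖ρ_l‖, and conversely pointwise multiplication by any f ∈ C_b(X,K) defines a multiplier whose norm equals ‖f‖_∞. -/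
open ZeroAtInfty MultiplierAlgebra Set

set_option linter.unusedSectionVars false

section Aux

variable {K X : Type*} [NontriviallyNormedField K]
    [TopologicalSpace X] [LocallyCompactSpace X]
    [T2Space X] [TotallyDisconnectedSpace X]

/-- Every point has a compact clopen neighborhood. -/
lemma exists_clopen_compact_mem (x : X) :
    ∃ U : Set X, IsClopen U ∧ IsCompact U ∧ x ∈ U := by
  obtain ⟨s, hs_comp, hs_mem⟩ := exists_compact_mem_nhds x
  obtain ⟨V, hV, hxV, hVs⟩ :=
    (loc_compact_Haus_tot_disc_of_zero_dim (H := X)).mem_nhds_iff.mp hs_mem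
  exact ⟨V, hV, hs_comp.of_isClosed_subset hV.isClosed hVs, hxV⟩

/-- The characteristic function of a compact clopen set, as an element of `C₀(X, K)`. -/
noncomputable def charC0 (U : Set X) (hU : IsClopen U) (hc : IsCompact U) : C₀(X, K) where
  toFun := U.indicator (fun _ => (1 : K))
  continuous_toFun := continuous_indicator (by simp [hU.frontier_eq])
    continuous_const.continuousOn
  zero_at_infty' := by
    refine tendsto_const_nhds.congr' ?_
    filter_upwards [hc.compl_mem_cocompact] with y hy
    simp [indicator_of_notMem hy]

lemma charC0_apply (U : Set X) (hU : IsClopen U) (hc : IsCompact U) (x : X) :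
    (charC0 U hU hc : C₀(X, K)) x = U.indicator (fun _ => (1 : K)) x := rfl

lemma charC0_apply_mem {U : Set X} (hU : IsClopen U) (hc : IsCompact U) {x : X} (hx : x ∈ U) :
    (charC0 U hU hc : C₀(X, K)) x = 1 := by
  rw [charC0_apply, indicator_of_mem hx]

lemma norm_C0_apply_le {b : C₀(X, K)} (x : X) : ‖b x‖ ≤ ‖b‖ := by
  rw [← ZeroAtInftyContinuousMap.norm_toBCF_eq_norm]
  exact b.toBCF.norm_coe_le_norm x

lemma norm_charC0_le (U : Set X) (hU : IsClopen U) (hc : IsCompact U) :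
    ‖(charC0 U hU hc : C₀(X, K))‖ ≤ 1 := by
  rw [← ZeroAtInftyContinuousMap.norm_toBCF_eq_norm]
  refine (BoundedContinuousFunction.norm_le zero_le_one).mpr fun x => ?_
  have : (charC0 U hU hc : C₀(X, K)).toBCF x
      = U.indicator (fun _ => (1 : K)) x := rfl
  rw [this]
  by_cases hx : x ∈ U
  · rw [indicator_of_mem hx]; simp
  · rw [indicator_of_notMem hx]; simp

/-- Multiplication of a `C₀` function by a bounded continuous function. -/
noncomputable def mulC0 (f : BoundedContinuousFunction X K) (b : C₀(X, K)) : C₀(X, K) where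
  toFun := fun x => f x * b x
  continuous_toFun := f.continuous.mul b.continuous
  zero_at_infty' := by
    refine squeeze_zero_norm (a := fun x => ‖f‖ * ‖b x‖) (fun x => ?_) ?_
    · rw [norm_mul]
      exact mul_le_mul_of_nonneg_right (f.norm_coe_le_norm x) (norm_nonneg _)
    · have hb : Filter.Tendsto (fun x => b x) (Filter.cocompact X) (nhds 0) :=
        b.zero_at_infty'
      have := (tendsto_zero_iff_norm_tendsto_zero.mp hb).const_mul ‖f‖
      simpa using this

lemma norm_mulC0_le (f : BoundedContinuousFunction X K) (b : C₀(X, K)) :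
    ‖mulC0 f b‖ ≤ ‖f‖ * ‖b‖ := by
  rw [← ZeroAtInftyContinuousMap.norm_toBCF_eq_norm]
  refine (BoundedContinuousFunction.norm_le
    (mul_nonneg (norm_nonneg _) (norm_nonneg _))).mpr fun x => ?_
  calc ‖f x * b x‖ = ‖f x‖ * ‖b x‖ := norm_mul _ _
    _ ≤ ‖f‖ * ‖b‖ := mul_le_mul (f.norm_coe_le_norm x) (norm_C0_apply_le x)
        (norm_nonneg _) (norm_nonneg _)

/-- Multiplication by a bounded continuous function as a continuous linear map. -/
noncomputable def mulCLM (f : BoundedContinuousFunction X K) : C₀(X, K) →L[K] C₀(X, K) :=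
  LinearMap.mkContinuous
    { toFun := mulC0 f
      map_add' := fun a b => by ext x; simp [mulC0, mul_add]
      map_smul' := fun c a => by
        ext x
        show f x * (c • a) x = (c • mulC0 f a) x
        show f x * (c * a x) = c * (f x * a x)
        ring }
    ‖f‖ (fun b => norm_mulC0_le f b)

@[simp] lemma mulCLM_apply (f : BoundedContinuousFunction X K) (b : C₀(X, K)) (x : X) :
    mulCLM f b x = f x * b x := rfl

end Aux

/-- For a field `K` with a complete nontrivial non-Archimedean absolute
value and a zero-dimensional locally compact Hausdorff space `X`, the multiplier algebra
`M(C₀(X, K))` is isometrically isomorphic to `C_b(X, K)`: every multiplier `(ρ_l, ρ_r)`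
is given by pointwise multiplication by a unique bounded continuous function `f : X → K`
with `‖f‖_∞ ≤ ‖ρ_l‖`, and conversely pointwise multiplication by any bounded continuous
`f` defines a multiplier of norm `‖f‖_∞`. -/
theorem multiplier_algebra_of_C0_eq_Cb {K X : Type*} [NontriviallyNormedField K]
    [CompleteSpace K] [IsUltrametricDist K] [TopologicalSpace X] [LocallyCompactSpace X]
    [T2Space X] [TotallyDisconnectedSpace X] :
    (∀ m : 𝓜(K, C₀(X, K)), ∃! f : BoundedContinuousFunction X K,
      (∀ (b : C₀(X, K)) (x : X), m.fst b x = f x * b x ∧ m.snd b x = f x * b x) ∧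
      ‖f‖ ≤ ‖m.fst‖) ∧
    (∀ f : BoundedContinuousFunction X K, ∃ m : 𝓜(K, C₀(X, K)),
      (∀ (b : C₀(X, K)) (x : X), m.fst b x = f x * b x ∧ m.snd b x = f x * b x) ∧
      ‖m‖ = ‖f‖) := by
  classical
  have mulpt : ∀ (a b : C₀(X, K)) (x : X), (a * b) x = a x * b x := fun a b x => rfl
  constructor
  · intro m
    set nb := fun x : X => (exists_clopen_compact_mem x).choose with hnb
    have nb_clopen : ∀ x : X, IsClopen (nb x) := fun x =>
      (exists_clopen_compact_mem x).choose_spec.1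
    have nb_compact : ∀ x : X, IsCompact (nb x) := fun x =>
      (exists_clopen_compact_mem x).choose_spec.2.1
    have nb_mem : ∀ x : X, x ∈ nb x := fun x =>
      (exists_clopen_compact_mem x).choose_spec.2.2
    set F : X → K := fun x =>
      m.fst (charC0 (nb x) (nb_clopen x) (nb_compact x)) x with hF
    have key : ∀ (U : Set X) (hU : IsClopen U) (hc : IsCompact U) (x : X), x ∈ U →
        m.snd (charC0 U hU hc) x = m.fst (charC0 U hU hc) x := by
      intro U hU hc x hx
      have h := congrArg (fun g : C₀(X, K) => g x)
        (m.central (charC0 U hU hc) (charC0 U hU hc))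
      rw [mulpt, mulpt, charC0_apply_mem hU hc hx, mul_one, one_mul] at h
      exact h
    have indep : ∀ (U V : Set X) (hU : IsClopen U) (hcU : IsCompact U)
        (hV : IsClopen V) (hcV : IsCompact V) (x : X), x ∈ U → x ∈ V →
        m.fst (charC0 U hU hcU) x = m.fst (charC0 V hV hcV) x := by
      intro U V hU hcU hV hcV x hxU hxV
      have h := congrArg (fun g : C₀(X, K) => g x)
        (m.central (charC0 U hU hcU) (charC0 V hV hcV))
      rw [mulpt, mulpt, charC0_apply_mem hV hcV hxV, charC0_apply_mem hU hcU hxU,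
        mul_one, one_mul] at h
      rw [← key U hU hcU x hxU, h]
    have F_eq : ∀ (U : Set X) (hU : IsClopen U) (hc : IsCompact U) (x : X), x ∈ U →
        F x = m.fst (charC0 U hU hc) x := fun U hU hc x hx =>
      indep _ U (nb_clopen x) (nb_compact x) hU hc x (nb_mem x) hx
    have fst_eq : ∀ (b : C₀(X, K)) (x : X), m.fst b x = F x * b x := by
      intro b x
      have h := congrArg (fun g : C₀(X, K) => g x)
        (m.central (charC0 (nb x) (nb_clopen x) (nb_compact x)) b)
      rw [mulpt, mulpt, charC0_apply_mem (nb_clopen x) (nb_compact x) (nb_mem x),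
        one_mul] at h
      rw [← h, key _ (nb_clopen x) (nb_compact x) x (nb_mem x)]
    have snd_eq : ∀ (b : C₀(X, K)) (x : X), m.snd b x = F x * b x := by
      intro b x
      have h := congrArg (fun g : C₀(X, K) => g x)
        (m.central b (charC0 (nb x) (nb_clopen x) (nb_compact x)))
      rw [mulpt, mulpt, charC0_apply_mem (nb_clopen x) (nb_compact x) (nb_mem x),
        mul_one] at h
      rw [h, mul_comm]
    have F_bdd : ∀ x : X, ‖F x‖ ≤ ‖m.fst‖ := by
      intro x
      calc ‖F x‖ ≤ ‖m.fst (charC0 (nb x) (nb_clopen x) (nb_compact x))‖ :=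
            norm_C0_apply_le x
        _ ≤ ‖m.fst‖ * ‖(charC0 (nb x) (nb_clopen x) (nb_compact x) : C₀(X, K))‖ :=
            (m.fst).le_opNorm _
        _ ≤ ‖m.fst‖ * 1 := mul_le_mul_of_nonneg_left
            (norm_charC0_le _ _ _) (norm_nonneg _)
        _ = ‖m.fst‖ := mul_one _
    have F_cont : Continuous F := by
      rw [continuous_iff_continuousAt]
      intro x
      refine ((m.fst (charC0 (nb x) (nb_clopen x)
        (nb_compact x))).continuous.continuousAt).congr ?_
      refine Filter.eventuallyEq_of_mem
        ((nb_clopen x).2.mem_nhds (nb_mem x)) fun y hy => ?_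
      exact (F_eq (nb x) (nb_clopen x) (nb_compact x) y hy).symm
    set f : BoundedContinuousFunction X K :=
      BoundedContinuousFunction.ofNormedAddCommGroup F F_cont ‖m.fst‖ F_bdd with hf
    have f_apply : ∀ x, f x = F x := fun x => rfl
    refine ⟨f, ⟨fun b x => ⟨by rw [f_apply, fst_eq], by rw [f_apply, snd_eq]⟩, ?_⟩, ?_⟩
    · exact BoundedContinuousFunction.norm_ofNormedAddCommGroup_le _ (norm_nonneg _) _
    · rintro g ⟨hg, -⟩
      ext x
      have h1 := (hg (charC0 (nb x) (nb_clopen x) (nb_compact x)) x).1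
      rw [charC0_apply_mem (nb_clopen x) (nb_compact x) (nb_mem x), mul_one] at h1
      rw [← h1, f_apply, F_eq (nb x) (nb_clopen x) (nb_compact x) x (nb_mem x)]
  · intro f
    set m : 𝓜(K, C₀(X, K)) :=
      { toProd := (mulCLM f, mulCLM f)
        central := fun a b => by
          ext x
          rw [mulpt, mulpt]
          show (mulCLM f a) x * b x = a x * (mulCLM f b) x
          rw [mulCLM_apply, mulCLM_apply]
          ring } with hm
    refine ⟨m, fun b x => ⟨rfl, rfl⟩, ?_⟩
    rw [DoubleCentralizer.norm_def]
    have hnorm : ‖DoubleCentralizer.toProdHom m‖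
        = max ‖mulCLM (K := K) f‖ ‖mulCLM (K := K) f‖ := Prod.norm_def _
    rw [hnorm, max_self]
    refine le_antisymm (LinearMap.mkContinuous_norm_le _ (norm_nonneg f) _) ?_
    refine (BoundedContinuousFunction.norm_le (norm_nonneg (mulCLM (K := K) f))).mpr
      fun x => ?_
    obtain ⟨U, hU, hc, hx⟩ := exists_clopen_compact_mem x
    calc ‖f x‖ = ‖(mulCLM f (charC0 U hU hc) : C₀(X, K)) x‖ := by
          rw [mulCLM_apply, charC0_apply_mem hU hc hx, mul_one]
      _ ≤ ‖mulCLM f (charC0 U hU hc)‖ := norm_C0_apply_le x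
      _ ≤ ‖mulCLM f‖ * ‖(charC0 U hU hc : C₀(X, K))‖ := (mulCLM f).le_opNorm _
      _ ≤ ‖mulCLM f‖ * 1 := mul_le_mul_of_nonneg_left (norm_charC0_le _ _ _)
          (norm_nonneg (mulCLM (K := K) f))
      _ = ‖mulCLM f‖ := mul_one _
end

section
/- Let K be a field with a complete nontrivial non-Archimedean absolute value and let G be a set. For every a ∈ c₀(G,K): (i) for each x ∈ c₀(G,K) the family (x(s)a(s))_{s∈G} is summable in K and |∑_{s∈G} x(s)a(s)| ≤ ‖x‖·‖a‖; (ii) the norm reproducing property holds: ‖a‖ = sup over nonzero x ∈ c₀(G,K) of |∑_{s∈G} x(s)a(s)| / ‖x‖. -/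
/-! On a discrete `G`, an element of `c₀(G, K)` tends to `0` along the cofinite filter, so over a
complete ultrametric field it is summable and its sum is bounded by its largest value. Applied to
`x * a` this gives (i). For (ii), testing against the indicator of a point `s` yields the quotient
`‖a s‖`, and `‖a‖` is the supremum of these values. -/

open ZeroAtInfty Filter Topology

namespace ZeroAtInftyContinuousMap

variable {G E : Type*} [TopologicalSpace G] [SeminormedAddCommGroup E]

lemma norm_apply_le (f : C₀(G, E)) (s : G) : ‖f s‖ ≤ ‖f‖ :=
  f.toBCF.norm_coe_le_norm s

lemma norm_le_of_forall_le (f : C₀(G, E)) {C : ℝ} (hC : 0 ≤ C) (h : ∀ s, ‖f s‖ ≤ C) :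
    ‖f‖ ≤ C :=
  (BoundedContinuousFunction.norm_le hC).2 h

lemma norm_tsum_le [IsUltrametricDist E] (f : C₀(G, E)) : ‖∑' s, f s‖ ≤ ‖f‖ :=
  IsUltrametricDist.norm_tsum_le_of_forall_le_of_nonneg (norm_nonneg f) f.norm_apply_le

variable [DiscreteTopology G]

lemma tendsto_cofinite_zero (f : C₀(G, E)) : Tendsto f cofinite (𝓝 0) :=
  cocompact_eq_cofinite G ▸ zero_at_infty f

lemma summable [IsUltrametricDist E] [CompleteSpace E] (f : C₀(G, E)) : Summable f :=
  NonarchimedeanAddGroup.summable_of_tendsto_cofinite_zero f.tendsto_cofinite_zero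

variable [DecidableEq G]

def single (s : G) (c : E) : C₀(G, E) where
  toFun := Pi.single s c
  continuous_toFun := continuous_of_discreteTopology
  zero_at_infty' := by
    rw [cocompact_eq_cofinite]
    exact tendsto_const_nhds.congr'
      ((eventually_cofinite_ne s).mono fun t ht => by simp [Pi.single_eq_of_ne ht])

@[simp]
lemma coe_single (s : G) (c : E) : ⇑(single s c) = Pi.single s c :=
  rfl

@[simp]
lemma norm_single (s : G) (c : E) : ‖single s c‖ = ‖c‖ := by
  refine le_antisymm (norm_le_of_forall_le _ (norm_nonneg c) fun t => ?_) ?_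
  · rcases eq_or_ne t s with rfl | hts
    · simp
    · simp [Pi.single_eq_of_ne hts]
  · simpa using (single s c).norm_apply_le s

end ZeroAtInftyContinuousMap

open ZeroAtInftyContinuousMap

/-- Let `K` be a field with a complete nontrivial non-Archimedean absolute
value and `G` a (discrete) set.  For every `a ∈ c₀(G, K)`:
(i) for each `x ∈ c₀(G, K)` the family `(x s * a s)` is summable and
`‖∑ x s * a s‖ ≤ ‖x‖ * ‖a‖`;
(ii) the norm reproducing property holds:
`‖a‖ = sup_{x ≠ 0} ‖∑ x s * a s‖ / ‖x‖`. -/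
theorem c0_norm_reproducing {K G : Type*} [NontriviallyNormedField K] [CompleteSpace K]
    [IsUltrametricDist K] [TopologicalSpace G] [DiscreteTopology G] (a : C₀(G, K)) :
    (∀ x : C₀(G, K), Summable (fun s : G => x s * a s) ∧
      ‖∑' s : G, x s * a s‖ ≤ ‖x‖ * ‖a‖) ∧
    ‖a‖ = ⨆ x : {x : C₀(G, K) // x ≠ 0}, ‖∑' s : G, (x : C₀(G, K)) s * a s‖ / ‖(x : C₀(G, K))‖ := by
  classical
  have hbound (x : C₀(G, K)) : ‖∑' s, x s * a s‖ ≤ ‖x‖ * ‖a‖ :=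
    (norm_tsum_le (x * a)).trans (norm_mul_le x a)
  have hratio (x : {x : C₀(G, K) // x ≠ 0}) :
      ‖∑' s, (x : C₀(G, K)) s * a s‖ / ‖(x : C₀(G, K))‖ ≤ ‖a‖ := by
    rw [div_le_iff₀ (norm_pos_iff.2 x.2), mul_comm]
    exact hbound x
  refine ⟨fun x => ⟨(x * a).summable, hbound x⟩,
    le_antisymm ?_ (Real.iSup_le hratio (norm_nonneg a))⟩
  refine norm_le_of_forall_le a (Real.iSup_nonneg fun _ => by positivity) fun s => ?_
  have hs : single s (1 : K) ≠ 0 := by simp [← norm_ne_zero_iff]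
  refine le_ciSup_of_le ⟨‖a‖, Set.forall_mem_range.2 hratio⟩ ⟨single s 1, hs⟩ ?_
  simp only [coe_single, Pi.single_apply, ite_mul, one_mul, zero_mul, tsum_ite_eq, norm_single,
    norm_one, div_one, le_refl]
end

section
/- Let K be a field with a complete nontrivial non-Archimedean absolute value and let G be a zero-dimensional locally compact Hausdorff topological group. Then the pointwise-multiplication Banach algebra C₀(G,K) possesses a bounded approximate identity consisting of idempotents of norm 1: for every u ∈ C₀(G,K) and every ε > 0 there exists a compact open subset H ⊆ G whose K-valued indicator function χ_H belongs to C₀(G,K), satisfies ‖χ_H‖ ≤ 1 and χ_H·χ_H = χ_H, and ‖u − u·χ_H‖ < ε; moreover the family of compact open subsets can be chosen increasing and directed, so that the corresponding net (χ_H) satisfies u·χ_H → u for every u ∈ C₀(G,K). -/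
/-!
A locally compact Hausdorff totally disconnected space has a basis of compact open sets, so every
compact set, in particular `{x | ε ≤ ‖u x‖}` for `u ∈ C₀(G, K)`, lies in a compact open set `H₀`.
For every compact open `H ⊇ H₀` the function `u - u * χ_H` vanishes on `H` and is smaller than `ε`
off `H`, so `‖u - u * χ_H‖ ≤ ε`.
-/

open ZeroAtInfty Filter TopologicalSpace
open scoped Classical

theorem IsCompact.exists_compactOpens_superset {X : Type*} [TopologicalSpace X]
    [LocallyCompactSpace X] [T2Space X] [TotallyDisconnectedSpace X] {S : Set X}
    (hS : IsCompact S) : ∃ H : CompactOpens X, S ⊆ H := by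
  obtain ⟨L, hL, hSL⟩ := exists_compact_superset hS
  have hclopen : ∀ x ∈ S, ∃ V : Set X, IsClopen V ∧ x ∈ V ∧ V ⊆ interior L := fun x hx =>
    loc_compact_Haus_tot_disc_of_zero_dim.mem_nhds_iff.mp (isOpen_interior.mem_nhds (hSL hx))
  choose V hV hxV hVL using hclopen
  let W : S → CompactOpens X := fun x =>
    ⟨⟨V x x.2, hL.of_isClosed_subset (hV x x.2).isClosed ((hVL x x.2).trans interior_subset)⟩,
      (hV x x.2).isOpen⟩
  obtain ⟨t, ht⟩ := hS.elim_finite_subcover (fun x => (W x : Set X)) (fun x => (W x).isOpen)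
    fun x hx => Set.mem_iUnion.mpr ⟨⟨x, hx⟩, hxV x hx⟩
  refine ⟨t.sup W, ht.trans ?_⟩
  simp only [Set.iUnion_subset_iff]
  exact fun x hx => Finset.le_sup (f := W) hx

namespace TopologicalSpace.CompactOpens

variable {X K : Type*} [TopologicalSpace X] [T2Space X] [NormedField K]

noncomputable def indicatorC₀ (H : CompactOpens X) : C₀(X, K) where
  toFun := (H : Set X).indicator 1
  continuous_toFun :=
    IsClopen.continuous_indicator ⟨H.isCompact.isClosed, H.isOpen⟩ continuous_const
  zero_at_infty' :=
    (HasCompactSupport.intro H.isCompact fun _ hx => Set.indicator_of_notMem hx _).is_zero_at_infty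

theorem indicatorC₀_apply (H : CompactOpens X) (x : X) :
    (H.indicatorC₀ : C₀(X, K)) x = if x ∈ (H : Set X) then 1 else 0 :=
  Set.indicator_apply _ _ _

theorem norm_indicatorC₀_le (H : CompactOpens X) : ‖(H.indicatorC₀ : C₀(X, K))‖ ≤ 1 := by
  rw [← ZeroAtInftyContinuousMap.norm_toBCF_eq_norm, BoundedContinuousFunction.norm_le zero_le_one]
  intro x
  by_cases hx : x ∈ (H : Set X) <;> simp [indicatorC₀_apply, hx]

theorem indicatorC₀_mul_self (H : CompactOpens X) :
    (H.indicatorC₀ : C₀(X, K)) * H.indicatorC₀ = H.indicatorC₀ := by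
  ext x
  by_cases hx : x ∈ (H : Set X) <;> simp [indicatorC₀_apply, hx]

theorem norm_sub_mul_indicatorC₀_le (u : C₀(X, K)) (H : CompactOpens X) {δ : ℝ} (hδ : 0 ≤ δ)
    (hu : ∀ x ∉ (H : Set X), ‖u x‖ ≤ δ) : ‖u - u * H.indicatorC₀‖ ≤ δ := by
  rw [← ZeroAtInftyContinuousMap.norm_toBCF_eq_norm, BoundedContinuousFunction.norm_le hδ]
  intro x
  by_cases hx : x ∈ (H : Set X) <;> simp [indicatorC₀_apply, hx, hδ, hu]

theorem exists_forall_notMem_norm_lt [LocallyCompactSpace X] [TotallyDisconnectedSpace X]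
    (u : C₀(X, K)) {ε : ℝ} (hε : 0 < ε) : ∃ H₀ : CompactOpens X, ∀ x ∉ (H₀ : Set X), ‖u x‖ < ε := by
  have hsmall : {x | ‖u x‖ < ε} ∈ cocompact X :=
    (tendsto_zero_iff_norm_tendsto_zero.mp (zero_at_infty u)).eventually_lt_const hε
  obtain ⟨C, hC, hCu⟩ := mem_cocompact.mp hsmall
  obtain ⟨H₀, hCH₀⟩ := hC.exists_compactOpens_superset
  exact ⟨H₀, fun x hx => hCu fun hxC => hx (hCH₀ hxC)⟩

theorem tendsto_mul_indicatorC₀ [LocallyCompactSpace X] [TotallyDisconnectedSpace X]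
    (u : C₀(X, K)) : Tendsto (fun H : CompactOpens X => u * H.indicatorC₀) atTop (nhds u) := by
  rw [Metric.tendsto_atTop]
  intro ε hε
  obtain ⟨H₀, hH₀⟩ := exists_forall_notMem_norm_lt u (half_pos hε)
  refine ⟨H₀, fun H hH => ?_⟩
  have hle : ‖u - u * H.indicatorC₀‖ ≤ ε / 2 :=
    norm_sub_mul_indicatorC₀_le u H (half_pos hε).le fun x hx =>
      (hH₀ x fun hx₀ => hx (hH hx₀)).le
  rw [dist_eq_norm, norm_sub_rev]
  linarith

end TopologicalSpace.CompactOpens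

theorem C0_zero_dim_group_approximate_identity_general {K G : Type*} [NontriviallyNormedField K]
    [TopologicalSpace G] [LocallyCompactSpace G] [T2Space G] [TotallyDisconnectedSpace G] :
    (∀ u : C₀(G, K), ∀ ε : ℝ, 0 < ε → ∃ (H : Set G) (χ : C₀(G, K)),
      IsCompact H ∧ IsOpen H ∧ (∀ x : G, χ x = if x ∈ H then (1 : K) else 0) ∧
      ‖χ‖ ≤ 1 ∧ χ * χ = χ ∧ ‖u - u * χ‖ < ε) ∧
    (∃ χ : CompactOpens G → C₀(G, K),
      (∀ (H : CompactOpens G) (x : G), χ H x = if x ∈ (H : Set G) then (1 : K) else 0) ∧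
      (∀ H : CompactOpens G, ‖χ H‖ ≤ 1 ∧ χ H * χ H = χ H) ∧
      (∀ u : C₀(G, K), Tendsto (fun H : CompactOpens G => u * χ H) atTop (nhds u))) := by
  refine ⟨fun u ε hε => ?_, CompactOpens.indicatorC₀, CompactOpens.indicatorC₀_apply,
    fun H => ⟨H.norm_indicatorC₀_le, H.indicatorC₀_mul_self⟩, CompactOpens.tendsto_mul_indicatorC₀⟩
  have hlim := CompactOpens.tendsto_mul_indicatorC₀ (K := K) u
  obtain ⟨H, hH⟩ := (hlim.eventually (Metric.ball_mem_nhds u hε)).exists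
  refine ⟨H, H.indicatorC₀, H.isCompact, H.isOpen, H.indicatorC₀_apply, H.norm_indicatorC₀_le,
    H.indicatorC₀_mul_self, ?_⟩
  rwa [dist_eq_norm, norm_sub_rev] at hH

/-- For a field `K` with a complete nontrivial non-Archimedean absolute
value and a zero-dimensional locally compact Hausdorff topological group `G`, the
pointwise-multiplication Banach algebra `C₀(G, K)` has a bounded approximate identity
consisting of indicator functions of compact open sets: for every `u` and `ε > 0` there
is a compact open `H ⊆ G` whose indicator `χ_H` lies in `C₀(G, K)`, is an idempotent of
norm at most `1`, and satisfies `‖u - u·χ_H‖ < ε`; moreover, indexing by the directed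
(under inclusion) family of all compact open subsets of `G`, the net `(χ_H)` satisfies
`u·χ_H → u` for every `u ∈ C₀(G, K)`. -/
theorem C0_zero_dim_group_approximate_identity {K G : Type*} [NontriviallyNormedField K]
    [CompleteSpace K] [IsUltrametricDist K] [Group G] [TopologicalSpace G]
    [IsTopologicalGroup G] [LocallyCompactSpace G] [T2Space G] [TotallyDisconnectedSpace G] :
    (∀ u : C₀(G, K), ∀ ε : ℝ, 0 < ε → ∃ (H : Set G) (χ : C₀(G, K)),
      IsCompact H ∧ IsOpen H ∧ (∀ x : G, χ x = if x ∈ H then (1 : K) else 0) ∧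
      ‖χ‖ ≤ 1 ∧ χ * χ = χ ∧ ‖u - u * χ‖ < ε) ∧
    (∃ χ : CompactOpens G → C₀(G, K),
      (∀ (H : CompactOpens G) (x : G), χ H x = if x ∈ (H : Set G) then (1 : K) else 0) ∧
      (∀ H : CompactOpens G, ‖χ H‖ ≤ 1 ∧ χ H * χ H = χ H) ∧
      (∀ u : C₀(G, K), Tendsto (fun H : CompactOpens G => u * χ H) atTop (nhds u))) :=
  C0_zero_dim_group_approximate_identity_general
end
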